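/- arXiv:math/0211280 — 3 statements merged into one kernel-verified Lean document; each statement's English description precedes it below -/
import Mathlib

section
/- For every x ∈ Ω₀, (φ(x) + x₀)·(μ·⟨φ(x)+x₀, φ(x)+x₀⟩)^{−1/2} = x. Consequently φ is injective on Ω₀, and its inverse on the image φ(Ω₀) is given by the explicit formula ψ(y) = (y + x₀)·(μ·⟨y+x₀, y+x₀⟩)^{−1/2}. -/
open scoped BigOperators

/-- The Minkowski bilinear form of signature `(n+1-p, p)` on `ℝ^(n+1)`. -/
noncomputable def mink (n p : ℕ) (x y : Fin (n + 1) → ℝ) : ℝ :=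
  ∑ i : Fin (n + 1), (if (i : ℕ) < p then (-1 : ℝ) else 1) * x i * y i

/-- The projective map `φ(x) = (εx − ⟨x,x₀⟩x₀)/⟨x,x₀⟩`. -/
noncomputable def phiMap (n p : ℕ) (ε : ℝ) (x₀ x : Fin (n + 1) → ℝ) : Fin (n + 1) → ℝ :=
  (mink n p x x₀)⁻¹ • (ε • x - mink n p x x₀ • x₀)

/-- `Ω₀ = {x | ⟨x,x⟩ = μ and ε⟨x,x₀⟩ > 0}`. -/
def Omega0 (n p : ℕ) (ε μ : ℝ) (x₀ : Fin (n + 1) → ℝ) : Set (Fin (n + 1) → ℝ) :=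
  {x | mink n p x x = μ ∧ 0 < ε * mink n p x x₀}

/-- The inverse of the projective map:
`ψ(y) = (y + x₀)·(μ⟨y+x₀, y+x₀⟩)^(−1/2)`. -/
noncomputable def psiMap (n p : ℕ) (μ : ℝ) (x₀ y : Fin (n + 1) → ℝ) : Fin (n + 1) → ℝ :=
  (Real.sqrt (μ * mink n p (y + x₀) (y + x₀)))⁻¹ • (y + x₀)

lemma mink_smul_smul (n p : ℕ) (a : ℝ) (x : Fin (n + 1) → ℝ) :
    mink n p (a • x) (a • x) = a ^ 2 * mink n p x x := by
  unfold mink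
  rw [Finset.mul_sum]
  refine Finset.sum_congr rfl fun i _ => ?_
  simp only [Pi.smul_apply, smul_eq_mul]
  ring

lemma phi_add_x₀ (n p : ℕ) (ε : ℝ) (x₀ x : Fin (n + 1) → ℝ)
    (hc : mink n p x x₀ ≠ 0) :
    phiMap n p ε x₀ x + x₀ = (ε * (mink n p x x₀)⁻¹) • x := by
  funext i
  simp only [phiMap, Pi.add_apply, Pi.smul_apply, Pi.sub_apply, smul_eq_mul]
  field_simp
  ring

/-- For `x ∈ Ω₀`, `(φ(x)+x₀)·(μ⟨φ(x)+x₀,φ(x)+x₀⟩)^(−1/2) = x`; consequently `φ` is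
injective on `Ω₀` and its inverse on the image `φ(Ω₀)` is given by `ψ`. -/
theorem projective_map_injective_with_explicit_inverse
    (n p : ℕ) (hn : 1 ≤ n) (hp : p ≤ n + 1) (ε μ : ℝ)
    (hε : ε = 1 ∨ ε = -1) (hμ : μ = 1 ∨ μ = -1)
    (x₀ : Fin (n + 1) → ℝ) (hx₀ : mink n p x₀ x₀ = ε) :
    (∀ x ∈ Omega0 n p ε μ x₀, psiMap n p μ x₀ (phiMap n p ε x₀ x) = x) ∧
    Set.InjOn (phiMap n p ε x₀) (Omega0 n p ε μ x₀) ∧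
    (∀ y ∈ phiMap n p ε x₀ '' Omega0 n p ε μ x₀,
      phiMap n p ε x₀ (psiMap n p μ x₀ y) = y) := by
  have hε2 : ε ^ 2 = 1 := by rcases hε with h | h <;> simp [h]
  have hμ2 : μ ^ 2 = 1 := by rcases hμ with h | h <;> simp [h]
  have key : ∀ x ∈ Omega0 n p ε μ x₀, psiMap n p μ x₀ (phiMap n p ε x₀ x) = x := by
    intro x hx
    obtain ⟨hxx, hpos⟩ := hx
    set c := mink n p x x₀ with hc
    have hc0 : c ≠ 0 := by
      intro h; rw [h, mul_zero] at hpos; exact lt_irrefl 0 hpos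
    have hadd := phi_add_x₀ n p ε x₀ x hc0
    unfold psiMap
    rw [hadd, mink_smul_smul, hxx]
    have harg : μ * ((ε * c⁻¹) ^ 2 * μ) = (c⁻¹) ^ 2 := by
      have : μ * ((ε * c⁻¹) ^ 2 * μ) = μ ^ 2 * ε ^ 2 * (c⁻¹) ^ 2 := by ring
      rw [this, hε2, hμ2]; ring
    rw [harg, Real.sqrt_sq_eq_abs]
    have habs : |c⁻¹| = ε * c⁻¹ := by
      rcases hε with h | h <;> subst h
      · rw [abs_of_pos (inv_pos.mpr (by linarith [hpos]))]; ring
      · have hcneg : c < 0 := by nlinarith [hpos]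
        rw [abs_of_neg (inv_neg''.mpr hcneg)]; ring
    rw [habs, smul_smul]
    have : (ε * c⁻¹)⁻¹ * (ε * c⁻¹) = 1 := by
      apply inv_mul_cancel₀
      intro h
      rcases hε with he | he <;> subst he <;> simp [inv_eq_zero, hc0] at h
    rw [this, one_smul]
  refine ⟨key, ?_, ?_⟩
  · intro x hx y hy h
    rw [← key x hx, ← key y hy, h]
  · rintro y ⟨x, hx, rfl⟩
    rw [key x hx]
end

section
/- Let x, x', X, X' ∈ ℝ^{n+1}, let x₀ satisfy ⟨x₀,x₀⟩ = ε ∈ {−1,+1}, let μ ∈ {−1,+1}, and assume ⟨x,x⟩ = μ, ⟨X,x⟩ = 0, and s := ⟨x+x', x₀⟩ ≠ 0. Set q := ⟨x,x₀⟩⟨X',x₀⟩ − ⟨x',x₀⟩⟨X,x₀⟩ and D₁ := (2/s²)(εsX − ε⟨X+X',x₀⟩x + q x₀). Then (s⁴/4)·⟨D₁, D₁⟩ = s²·⟨X,X⟩ + μ·⟨X+X', x₀⟩² − ε·q². -/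
open scoped BigOperators

lemma mink_comm (n p : ℕ) (y w : Fin (n+1) → ℝ) : mink n p y w = mink n p w y := by
  unfold mink; apply Finset.sum_congr rfl; intro i _; ring

lemma mink_add_left (n p : ℕ) (y z w : Fin (n+1) → ℝ) :
    mink n p (y + z) w = mink n p y w + mink n p z w := by
  unfold mink; rw [← Finset.sum_add_distrib]; apply Finset.sum_congr rfl; intro i _
  simp only [Pi.add_apply]; split <;> ring

lemma mink_sub_left (n p : ℕ) (y z w : Fin (n+1) → ℝ) :
    mink n p (y - z) w = mink n p y w - mink n p z w := by
  unfold mink; rw [← Finset.sum_sub_distrib]; apply Finset.sum_congr rfl; intro i _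
  simp only [Pi.sub_apply]; split <;> ring

lemma mink_smul_left (n p : ℕ) (c : ℝ) (y w : Fin (n+1) → ℝ) :
    mink n p (c • y) w = c * mink n p y w := by
  unfold mink; rw [Finset.mul_sum]; apply Finset.sum_congr rfl; intro i _
  simp only [Pi.smul_apply, smul_eq_mul]; split <;> ring

lemma mink_add_right (n p : ℕ) (w y z : Fin (n+1) → ℝ) :
    mink n p w (y + z) = mink n p w y + mink n p w z := by
  rw [mink_comm, mink_add_left, mink_comm n p y, mink_comm n p z]

lemma mink_sub_right (n p : ℕ) (w y z : Fin (n+1) → ℝ) :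
    mink n p w (y - z) = mink n p w y - mink n p w z := by
  rw [mink_comm, mink_sub_left, mink_comm n p y, mink_comm n p z]

lemma mink_smul_right (n p : ℕ) (c : ℝ) (w y : Fin (n+1) → ℝ) :
    mink n p w (c • y) = c * mink n p w y := by
  rw [mink_comm, mink_smul_left, mink_comm n p y]

/-- Squared-norm formula for the differential of the first component of the global
Pogorelov map: with `s = ⟨x+x',x₀⟩`, `q = ⟨x,x₀⟩⟨X',x₀⟩ − ⟨x',x₀⟩⟨X,x₀⟩` and
`D₁ = (2/s²)(εsX − ε⟨X+X',x₀⟩x + q·x₀)`, one has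
`(s⁴/4)⟨D₁,D₁⟩ = s²⟨X,X⟩ + μ⟨X+X',x₀⟩² − εq²`. -/
theorem pogorelov_differential_squared_norm
    (n p : ℕ) (hn : 1 ≤ n) (hp : p ≤ n + 1) (ε μ : ℝ)
    (hε : ε = 1 ∨ ε = -1) (hμ : μ = 1 ∨ μ = -1)
    (x₀ x x' X X' : Fin (n + 1) → ℝ)
    (hx₀ : mink n p x₀ x₀ = ε) (hx : mink n p x x = μ)
    (hXx : mink n p X x = 0)
    (s q : ℝ) (D₁ : Fin (n + 1) → ℝ)
    (hs : s = mink n p (x + x') x₀) (hs0 : s ≠ 0)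
    (hq : q = mink n p x x₀ * mink n p X' x₀ - mink n p x' x₀ * mink n p X x₀)
    (hD₁ : D₁ = (2 / s ^ 2) •
      ((ε * s) • X - (ε * mink n p (X + X') x₀) • x + q • x₀)) :
    s ^ 4 / 4 * mink n p D₁ D₁
      = s ^ 2 * mink n p X X + μ * (mink n p (X + X') x₀) ^ 2 - ε * q ^ 2 := by
  rw [mink_add_left] at hs
  rw [hD₁]
  simp only [mink_smul_left, mink_smul_right, mink_add_left, mink_add_right,
    mink_sub_left, mink_sub_right]
  simp only [mink_comm n p x X, mink_comm n p x₀ X, mink_comm n p x₀ x]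
  rw [hXx, hx, hx₀]
  subst hs hq
  rcases hε with rfl | rfl <;> field_simp <;> ring
end

section
/- Let ρ be a linear map of ℝ^{n+1} preserving the Minkowski form (⟨ρu, ρv⟩ = ⟨u,v⟩ for all u, v) with ρ(x₀) = x₀. Then for all x, x' with ⟨x+x', x₀⟩ ≠ 0 one has ⟨ρx+ρx', x₀⟩ = ⟨x+x', x₀⟩ and Φ(ρx, ρx') = (ρ(Φ₁(x,x')), ρ(Φ₂(x,x'))), i.e. the global Pogorelov map Φ commutes with isometries fixing the center x₀. -/
open scoped BigOperators

/-- First component of the global Pogorelov map: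
`Φ₁(x,x') = 2(εx − ⟨x,x₀⟩x₀)/⟨x+x',x₀⟩`. -/
noncomputable def pogo1 (n p : ℕ) (ε : ℝ) (x₀ x x' : Fin (n + 1) → ℝ) : Fin (n + 1) → ℝ :=
  (2 / mink n p (x + x') x₀) • (ε • x - mink n p x x₀ • x₀)

/-- Second component of the global Pogorelov map:
`Φ₂(x,x') = 2(εx' − ⟨x',x₀⟩x₀)/⟨x+x',x₀⟩`. -/
noncomputable def pogo2 (n p : ℕ) (ε : ℝ) (x₀ x x' : Fin (n + 1) → ℝ) : Fin (n + 1) → ℝ :=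
  (2 / mink n p (x + x') x₀) • (ε • x' - mink n p x' x₀ • x₀)

/-- The global Pogorelov map commutes with isometries fixing the center `x₀`:
`⟨ρx+ρx',x₀⟩ = ⟨x+x',x₀⟩` and `Φ(ρx,ρx') = (ρ(Φ₁(x,x')), ρ(Φ₂(x,x')))`. -/
theorem pogorelov_global_equivariant
    (n p : ℕ) (hn : 1 ≤ n) (hp : p ≤ n + 1) (ε : ℝ) (hε : ε = 1 ∨ ε = -1)
    (x₀ : Fin (n + 1) → ℝ) (hx₀ : mink n p x₀ x₀ = ε)
    (ρ : (Fin (n + 1) → ℝ) →ₗ[ℝ] (Fin (n + 1) → ℝ))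
    (hρ : ∀ u v : Fin (n + 1) → ℝ, mink n p (ρ u) (ρ v) = mink n p u v)
    (hρx₀ : ρ x₀ = x₀) :
    ∀ x x' : Fin (n + 1) → ℝ, mink n p (x + x') x₀ ≠ 0 →
      mink n p (ρ x + ρ x') x₀ = mink n p (x + x') x₀ ∧
      pogo1 n p ε x₀ (ρ x) (ρ x') = ρ (pogo1 n p ε x₀ x x') ∧
      pogo2 n p ε x₀ (ρ x) (ρ x') = ρ (pogo2 n p ε x₀ x x') := by
  intro x x' hxx'
  have key : mink n p (ρ x + ρ x') x₀ = mink n p (x + x') x₀ := by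
    nth_rewrite 1 [← hρx₀]; rw [← map_add]; exact hρ _ _
  have keyx : mink n p (ρ x) x₀ = mink n p x x₀ := by
    nth_rewrite 1 [← hρx₀]; exact hρ _ _
  have keyx' : mink n p (ρ x') x₀ = mink n p x' x₀ := by
    nth_rewrite 1 [← hρx₀]; exact hρ _ _
  refine ⟨key, ?_, ?_⟩
  · rw [pogo1, pogo1, key, keyx, map_smul, map_sub, map_smul, map_smul, hρx₀]
  · rw [pogo2, pogo2, key, keyx', map_smul, map_sub, map_smul, map_smul, hρx₀]
end
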